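/- Under the assumptions of the time-correlated noise model v_k = D_{k-1} v_{k-1} + u_{k-1} with invertible D_k, the covariance function Σ_{k,s}^v = Cov[v_k, v_s] for s ≤ k factorizes in separable form as Σ_{k,s}^v = 𝐃_k 𝐅_s^T, where 𝐃_k = D_{k-1} ⋯ D_0 and 𝐅_s^T = (D_{s-1} ⋯ D_0)^{-1} Σ_s^v. -/

import Mathlib

open MeasureTheory Matrix

/-- Expectation of a random vector, componentwise. -/
noncomputable def Evec {Ω : Type*} [MeasurableSpace Ω] (μ : Measure Ω) {ι : Type*}
    (f : Ω → ι → ℝ) : ι → ℝ := fun i => ∫ ω, f ω i ∂μ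

/-- Covariance matrix `Cov[f, g] = E[(f - E f)(g - E g)ᵀ]`. -/
noncomputable def Cov {Ω : Type*} [MeasurableSpace Ω] (μ : Measure Ω) {ι κ : Type*}
    (f : Ω → ι → ℝ) (g : Ω → κ → ℝ) : Matrix ι κ ℝ :=
  Matrix.of fun i j => ∫ ω, (f ω i - Evec μ f i) * (g ω j - Evec μ g j) ∂μ

/-- Ordered product `D_{k-1} ⋯ D_s` (equal to `1` when `k ≤ s`). -/
noncomputable def Dprod {n : ℕ} (D : ℕ → Matrix (Fin n) (Fin n) ℝ) (s : ℕ) :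
    ℕ → Matrix (Fin n) (Fin n) ℝ
  | 0 => 1
  | k + 1 => if k + 1 ≤ s then 1 else D k * Dprod D s k

/-!
The state `v_s` is a linear combination of `v_0, u_0, …, u_{s-1}`, all uncorrelated with `u_k`
for `k ≥ s`; hence `Cov[v_{k+1}, v_s] = D_k Cov[v_k, v_s]`, so `Σ_{k,s}^v = D_{k-1} ⋯ D_s Σ_s^v`,
and `D_{k-1} ⋯ D_s = 𝐃_k 𝐃_s⁻¹` by invertibility of the `D_j`.
-/

open ProbabilityTheory

section Cov

variable {Ω : Type*} [MeasurableSpace Ω] {μ : Measure Ω} {ι κ η : Type*}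

lemma Cov_apply (f : Ω → ι → ℝ) (g : Ω → κ → ℝ) (i : ι) (j : κ) :
    Cov μ f g i j = cov[fun ω ↦ f ω i, fun ω ↦ g ω j; μ] :=
  rfl

lemma Cov_transpose (f : Ω → ι → ℝ) (g : Ω → κ → ℝ) : (Cov μ f g)ᵀ = Cov μ g f := by
  ext i j
  exact covariance_comm _ _

lemma ProbabilityTheory.IndepFun.Cov_eq_zero [Fintype ι] [Fintype κ]
    {f : Ω → ι → ℝ} {g : Ω → κ → ℝ} (hfg : IndepFun f g μ) (hf : MemLp f 2 μ)
    (hg : MemLp g 2 μ) : Cov μ f g = 0 := by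
  ext i j
  exact (hfg.comp (measurable_pi_apply i) (measurable_pi_apply j)).covariance_eq_zero
    (hf.eval i) (hg.eval j)

lemma MeasureTheory.MemLp.mulVec [Fintype ι] [Fintype κ] {p : ENNReal} {f : Ω → κ → ℝ}
    (A : Matrix ι κ ℝ) (hf : MemLp f p μ) :
    MemLp (fun ω ↦ A *ᵥ f ω) p μ :=
  memLp_pi_iff.mpr fun i ↦ memLp_finsetSum _ fun l _ ↦ (hf.eval l).const_mul (A i l)

lemma Cov_add_left [IsFiniteMeasure μ] [Fintype ι] [Fintype κ] {f g : Ω → ι → ℝ}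
    {h : Ω → κ → ℝ} (hf : MemLp f 2 μ) (hg : MemLp g 2 μ) (hh : MemLp h 2 μ) :
    Cov μ (f + g) h = Cov μ f h + Cov μ g h := by
  ext i j
  exact covariance_add_left (hf.eval i) (hg.eval i) (hh.eval j)

lemma Cov_mulVec_left [IsFiniteMeasure μ] [Fintype κ] [Fintype η] {f : Ω → κ → ℝ}
    {h : Ω → η → ℝ} (A : Matrix ι κ ℝ) (hf : MemLp f 2 μ) (hh : MemLp h 2 μ) :
    Cov μ (fun ω ↦ A *ᵥ f ω) h = A * Cov μ f h := by
  ext i j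
  simp only [Cov_apply, Matrix.mul_apply, Matrix.mulVec, dotProduct]
  rw [covariance_fun_sum_left (fun l ↦ (hf.eval l).const_mul (A i l)) (hh.eval j)]
  simp only [covariance_const_mul_left]

end Cov

lemma Dprod_of_le {n : ℕ} (D : ℕ → Matrix (Fin n) (Fin n) ℝ) {s k : ℕ} (h : k ≤ s) :
    Dprod D s k = 1 := by
  cases k with
  | zero => rfl
  | succ k => simp [Dprod, h]

lemma Dprod_succ {n : ℕ} (D : ℕ → Matrix (Fin n) (Fin n) ℝ) {s k : ℕ} (h : s ≤ k) :
    Dprod D s (k + 1) = D k * Dprod D s k := by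
  rw [Dprod, if_neg (by omega)]

lemma Dprod_mul_Dprod {n : ℕ} (D : ℕ → Matrix (Fin n) (Fin n) ℝ) {s k : ℕ} (h : s ≤ k) :
    Dprod D s k * Dprod D 0 s = Dprod D 0 k := by
  induction k, h using Nat.le_induction with
  | base => rw [Dprod_of_le D le_rfl, Matrix.one_mul]
  | succ k hsk ih =>
    rw [Dprod_succ D hsk, Dprod_succ D (Nat.zero_le k), Matrix.mul_assoc, ih]

lemma isUnit_Dprod {n : ℕ} {D : ℕ → Matrix (Fin n) (Fin n) ℝ} (hD : ∀ k, IsUnit (D k))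
    (k : ℕ) :
    IsUnit (Dprod D 0 k) := by
  induction k with
  | zero => exact isUnit_one
  | succ k ih => rw [Dprod_succ D (Nat.zero_le k)]; exact (hD k).mul ih

section StateRecursion

variable {Ω : Type*} [MeasurableSpace Ω] {μ : Measure Ω} [IsFiniteMeasure μ]

lemma Cov_state_noise_eq_zero {ι : Type*} [Fintype ι] {D : ℕ → Matrix ι ι ℝ}
    {v u : ℕ → Ω → ι → ℝ} (hrec : ∀ k, v (k + 1) = (fun ω ↦ D k *ᵥ v k ω) + u k)
    (hvL2 : ∀ k, MemLp (v k) 2 μ) (huL2 : ∀ k, MemLp (u k) 2 μ)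
    (hwhite : ∀ k s, k ≠ s → Cov μ (u k) (u s) = 0) (hinit : ∀ k, Cov μ (v 0) (u k) = 0)
    {s k : ℕ} (hsk : s ≤ k) : Cov μ (v s) (u k) = 0 := by
  induction s with
  | zero => exact hinit k
  | succ s ih =>
    rw [hrec, Cov_add_left ((hvL2 s).mulVec _) (huL2 s) (huL2 k),
      Cov_mulVec_left _ (hvL2 s) (huL2 k), ih (by omega), hwhite s k (by omega),
      Matrix.mul_zero, add_zero]

lemma Cov_state_eq_Dprod_mul {n : ℕ} {D : ℕ → Matrix (Fin n) (Fin n) ℝ}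
    {v u : ℕ → Ω → Fin n → ℝ} (hrec : ∀ k, v (k + 1) = (fun ω ↦ D k *ᵥ v k ω) + u k)
    (hvL2 : ∀ k, MemLp (v k) 2 μ) (huL2 : ∀ k, MemLp (u k) 2 μ)
    {s : ℕ} (hnoise : ∀ k, s ≤ k → Cov μ (v s) (u k) = 0) {k : ℕ} (hsk : s ≤ k) :
    Cov μ (v k) (v s) = Dprod D s k * Cov μ (v s) (v s) := by
  induction k, hsk using Nat.le_induction with
  | base => rw [Dprod_of_le D le_rfl, Matrix.one_mul]
  | succ k hsk ih =>
    rw [hrec, Cov_add_left ((hvL2 k).mulVec _) (huL2 k) (hvL2 s),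
      Cov_mulVec_left _ (hvL2 k) (hvL2 s), ih, ← Cov_transpose (v s) (u k), hnoise k hsk,
      Matrix.transpose_zero, add_zero, Dprod_succ D hsk, Matrix.mul_assoc]

end StateRecursion

theorem time_correlated_noise_separable_general {Ω : Type*} [MeasurableSpace Ω] (μ : Measure Ω)
    [IsProbabilityMeasure μ] (n : ℕ) (D : ℕ → Matrix (Fin n) (Fin n) ℝ)
    (hD : ∀ k, IsUnit (D k))
    (v u : ℕ → Ω → Fin n → ℝ)
    (hvL2 : ∀ k, MemLp (v k) 2 μ) (huL2 : ∀ k, MemLp (u k) 2 μ)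
    (hrec : ∀ k, 1 ≤ k → ∀ ω, v k ω = (D (k - 1)).mulVec (v (k - 1) ω) + u (k - 1) ω)
    (hwhite : ∀ k s, k ≠ s → Cov μ (u k) (u s) = 0)
    (hindep : ProbabilityTheory.IndepFun (v 0) (fun ω k => u k ω) μ) :
    ∀ k s, s ≤ k →
      Cov μ (v k) (v s) = Dprod D 0 k * ((Dprod D 0 s)⁻¹ * Cov μ (v s) (v s)) := by
  have hrec' : ∀ k, v (k + 1) = (fun ω ↦ D k *ᵥ v k ω) + u k := fun k ↦
    funext fun ω ↦ by simpa using hrec (k + 1) (Nat.le_add_left 1 k) ω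
  have hinit : ∀ k, Cov μ (v 0) (u k) = 0 := fun k ↦
    (hindep.comp measurable_id (measurable_pi_apply k)).Cov_eq_zero (hvL2 0) (huL2 k)
  intro k s hsk
  have hnoise : ∀ k, s ≤ k → Cov μ (v s) (u k) = 0 := fun _ ↦
    Cov_state_noise_eq_zero hrec' hvL2 huL2 hwhite hinit
  rw [Cov_state_eq_Dprod_mul hrec' hvL2 huL2 hnoise hsk, ← Dprod_mul_Dprod D hsk,
    ← Matrix.mul_assoc, Matrix.mul_nonsing_inv_cancel_right _ _
      ((Matrix.isUnit_iff_isUnit_det _).mp (isUnit_Dprod hD s))]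

/-- For the time-correlated noise `v_k = D_{k-1} v_{k-1} + u_{k-1}` with invertible `D_k`,
the covariance function factorizes in separable form:
`Σ_{k,s}^v = 𝐃_k 𝐅_sᵀ` for `s ≤ k`, with `𝐃_k = D_{k-1}⋯D_0` and
`𝐅_sᵀ = (D_{s-1}⋯D_0)⁻¹ Σ_s^v`. -/
theorem time_correlated_noise_separable {Ω : Type*} [MeasurableSpace Ω] (μ : Measure Ω)
    [IsProbabilityMeasure μ] (n : ℕ) (D : ℕ → Matrix (Fin n) (Fin n) ℝ)
    (hD : ∀ k, IsUnit (D k))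
    (v u : ℕ → Ω → Fin n → ℝ)
    (hvmeas : ∀ k, Measurable (v k)) (humeas : ∀ k, Measurable (u k))
    (hvL2 : ∀ k, MemLp (v k) 2 μ) (huL2 : ∀ k, MemLp (u k) 2 μ)
    (hrec : ∀ k, 1 ≤ k → ∀ ω, v k ω = (D (k - 1)).mulVec (v (k - 1) ω) + u (k - 1) ω)
    (hv0mean : Evec μ (v 0) = 0)
    (humean : ∀ k, Evec μ (u k) = 0)
    (hwhite : ∀ k s, k ≠ s → Cov μ (u k) (u s) = 0)
    (hindep : ProbabilityTheory.IndepFun (v 0) (fun ω k => u k ω) μ) :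
    ∀ k s, s ≤ k →
      Cov μ (v k) (v s) = Dprod D 0 k * ((Dprod D 0 s)⁻¹ * Cov μ (v s) (v s)) :=
  time_correlated_noise_separable_general μ n D hD v u hvL2 huL2 hrec hwhite hindep
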